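/- For integers a ≤ 0 < b, the sublattice index of the polytope F̃_1(a,b) = conv({(0,0,a),(0,0,b),(-1,-1,0),(2,-1,1),(-1,2,-1)}) equals 3; specifically, the affine lattice generated by its lattice points is {(x,y,z) ∈ Z^3 : x ≡ y (mod 3)}. -/
import Mathlib


/-- The subgroup of `ℤ³` generated by all differences of lattice points of `P`. -/
def diffLat (A : Set (Fin 3 → ℤ)) : AddSubgroup (Fin 3 → ℤ) :=
  AddSubgroup.closure {v | ∃ x ∈ A, ∃ y ∈ A, v = x - y}

/-- The sublattice `{(x,y,z) ∈ ℤ³ : x ≡ y (mod 3)}`. -/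
def mod3Lat : AddSubgroup (Fin 3 → ℤ) where
  carrier := {v | (3 : ℤ) ∣ v 0 - v 1}
  zero_mem' := by simp
  add_mem' := by
    intro a b ha hb
    simpa [sub_add_sub_comm] using dvd_add ha hb
  neg_mem' := by
    intro a ha
    have : (3 : ℤ) ∣ a 1 - a 0 := (dvd_sub_comm).1 ha
    simpa [Pi.neg_apply, neg_sub', sub_neg_eq_add, neg_add_eq_sub] using this

/-- The lattice points of `F̃₁(a,b)`. -/
def F1Pts (a b : ℤ) : Set (Fin 3 → ℤ) :=
  {v | ∃ t : ℤ, a ≤ t ∧ t ≤ b ∧ v = ![0, 0, t]} ∪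
  {![-1, -1, 0], ![2, -1, 1], ![-1, 2, -1]}

def phi3 : (Fin 3 → ℤ) →+ ZMod 3 where
  toFun v := (v 0 : ZMod 3) - (v 1 : ZMod 3)
  map_zero' := by simp
  map_add' x y := by push_cast [Pi.add_apply]; ring

lemma mod3_eq_ker : mod3Lat = phi3.ker := by
  ext v
  simp only [mod3Lat, AddSubgroup.mem_mk, Set.mem_setOf_eq, AddMonoidHom.mem_ker, phi3,
    AddMonoidHom.coe_mk, ZeroHom.coe_mk]
  rw [show ((v 0 : ZMod 3) - v 1 = 0) ↔ (((v 0 - v 1 : ℤ) : ZMod 3) = 0) by push_cast; rfl,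
    ZMod.intCast_zmod_eq_zero_iff_dvd]
  norm_cast

theorem stmt7 (a b : ℤ) (ha : a ≤ 0) (hb : 0 < b) :
    diffLat (F1Pts a b) = mod3Lat ∧ mod3Lat.index = 3 := by
  constructor
  · apply le_antisymm
    · rw [diffLat, AddSubgroup.closure_le]
      rintro v ⟨x, hx, y, hy, rfl⟩
      have key : ∀ z ∈ F1Pts a b, (3 : ℤ) ∣ z 0 - z 1 := by
        rintro z (⟨t, _, _, rfl⟩ | hz)
        · simp
        · rcases hz with rfl | rfl | rfl <;> simp
      have hx' := key x hx
      have hy' := key y hy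
      show (3 : ℤ) ∣ (x - y) 0 - (x - y) 1
      have : (x - y) 0 - (x - y) 1 = (x 0 - x 1) - (y 0 - y 1) := by
        simp [Pi.sub_apply]; ring
      rw [this]
      exact dvd_sub hx' hy'
    · intro v hv
      have hv' : (3 : ℤ) ∣ v 0 - v 1 := hv
      obtain ⟨k, hk⟩ := hv'
      -- generators
      have h00 : (![0,0,0] : Fin 3 → ℤ) ∈ F1Pts a b := Or.inl ⟨0, ha, le_of_lt hb, rfl⟩
      have h01 : (![0,0,1] : Fin 3 → ℤ) ∈ F1Pts a b := Or.inl ⟨1, by linarith, hb, rfl⟩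
      have hm : (![-1,-1,0] : Fin 3 → ℤ) ∈ F1Pts a b := Or.inr (Or.inl rfl)
      have h2 : (![2,-1,1] : Fin 3 → ℤ) ∈ F1Pts a b := Or.inr (Or.inr (Or.inl rfl))
      have ge3 : (![0,0,1] : Fin 3 → ℤ) ∈ diffLat (F1Pts a b) :=
        AddSubgroup.subset_closure ⟨_, h01, _, h00, by funext i; fin_cases i <;> simp⟩
      have g110 : (![1,1,0] : Fin 3 → ℤ) ∈ diffLat (F1Pts a b) :=
        AddSubgroup.subset_closure ⟨_, h00, _, hm, by funext i; fin_cases i <;> simp⟩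
      have g301 : (![3,0,1] : Fin 3 → ℤ) ∈ diffLat (F1Pts a b) :=
        AddSubgroup.subset_closure ⟨_, h2, _, hm, by funext i; fin_cases i <;> simp⟩
      have : v = (v 1) • ![1,1,0] + k • ![3,0,1] + (v 2 - k) • ![0,0,1] := by
        funext i; fin_cases i <;> simp [Pi.smul_apply, Pi.add_apply] <;> linarith
      rw [this]
      exact add_mem (add_mem (zsmul_mem g110 _) (zsmul_mem g301 _)) (zsmul_mem ge3 _)
  · rw [mod3_eq_ker, AddSubgroup.index_ker]
    have hsurj : Function.Surjective phi3 := by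
      intro c
      exact ⟨![c.val, 0, 0], by simp [phi3]⟩
    rw [AddMonoidHom.range_eq_top.mpr hsurj, AddSubgroup.card_top]
    simp [Nat.card_eq_fintype_card]
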